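/- Let R be any connectivity graph of the internal components of T \ F. Then two internal components C and C' of T \ F are connected in G \ F if and only if r_C and r_{C'} are connected in R. -/

import Mathlib

variable {n : ℕ}

/-- `Anc p v u` : `v` is an ancestor of `u` in the rooted tree with parent function `p`
(every vertex is an ancestor of itself). -/
def Anc (p : Fin n → Fin n) (v u : Fin n) : Prop :=
  Relation.ReflTransGen (fun a b => p a = b) u v

/-- `ND p v` : the number of descendants of `v` (including `v`). -/
noncomputable def ND (p : Fin n → Fin n) (v : Fin n) : ℕ :=
  Set.ncard {u | Anc p v u}

/-- `InComp p F v u` : `u` lies in the same connected component of `T \ F` as `v`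
(connectivity via tree edges avoiding the failed set `F`). -/
def InComp (p : Fin n → Fin n) (F : Set (Fin n)) (v u : Fin n) : Prop :=
  Relation.ReflTransGen (fun a b => a ∉ F ∧ b ∉ F ∧ (p a = b ∨ p b = a)) v u

/-- `ρ` is the root of its connected component of `T \ F`:
`ρ` is non-failed and an ancestor of every vertex of its component. -/
def IsCompRoot (p : Fin n → Fin n) (F : Set (Fin n)) (ρ : Fin n) : Prop :=
  ρ ∉ F ∧ ∀ u, InComp p F ρ u → Anc p ρ u

/-- The component rooted at `ρ` is internal: some failed vertex is a descendant of `ρ`. -/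
def Internal (p : Fin n → Fin n) (F : Set (Fin n)) (ρ : Fin n) : Prop :=
  ∃ f ∈ F, Anc p ρ f

/-- `b` is a boundary vertex of the component of `T \ F` rooted at `ρ`. -/
def Boundary (p : Fin n → Fin n) (F : Set (Fin n)) (ρ b : Fin n) : Prop :=
  b ∈ F ∧ InComp p F ρ (p b)

/-- `(x, y)` is a back-edge: a non-tree edge of `G` with `y` an ancestor of `x`. -/
def IsBack (G : SimpleGraph (Fin n)) (p : Fin n → Fin n) (x y : Fin n) : Prop :=
  G.Adj x y ∧ Anc p y x ∧ p x ≠ y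

/-- The set of lower endpoints `y < v` of back-edges whose upper endpoint is a
descendant of `v`. -/
def LowSet (G : SimpleGraph (Fin n)) (p : Fin n → Fin n) (v : Fin n) : Set (Fin n) :=
  {y | (∃ x, Anc p v x ∧ IsBack G p x y) ∧ y < v}

/-- `IsLow G p k v y` : `y = low_k(v)`, i.e. `y` is the `k`-th smallest element of
`LowSet G p v` (for `k ≥ 1`). -/
def IsLow (G : SimpleGraph (Fin n)) (p : Fin n → Fin n) (k : ℕ) (v y : Fin n) : Prop :=
  y ∈ LowSet G p v ∧ Set.ncard {z ∈ LowSet G p v | z < y} = k - 1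

/-- `a` and `b` are connected in `G \ F`. -/
def ConnGF (G : SimpleGraph (Fin n)) (F : Set (Fin n)) (a b : Fin n) : Prop :=
  Relation.ReflTransGen (fun u w => G.Adj u w ∧ u ∉ F ∧ w ∉ F) a b

/-- `g = parent_F(f)` : `g` is the nearest (deepest) proper ancestor of `f` lying in `F`. -/
def NearestF (p : Fin n → Fin n) (F : Set (Fin n)) (f g : Fin n) : Prop :=
  g ∈ F ∧ Anc p g f ∧ g ≠ f ∧ ∀ g' ∈ F, Anc p g' f → g' ≠ f → Anc p g' g

/-- `ρ` is the root of an internal component of `T \ F`. -/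
def IRoot (p : Fin n → Fin n) (F : Set (Fin n)) (ρ : Fin n) : Prop :=
  IsCompRoot p F ρ ∧ Internal p F ρ

/-- `ρ` is the root of a hanging subtree of `T \ F`. -/
def HangRoot (p : Fin n → Fin n) (F : Set (Fin n)) (ρ : Fin n) : Prop :=
  IsCompRoot p F ρ ∧ p ρ ∈ F ∧ ¬ Internal p F ρ

/-- The components of `T \ F` rooted at `a` and at `b` are joined by a back-edge. -/
def JoinedBack (G : SimpleGraph (Fin n)) (p : Fin n → Fin n) (F : Set (Fin n))
    (a b : Fin n) : Prop :=
  ∃ x y, IsBack G p x y ∧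
    ((InComp p F a x ∧ InComp p F b y) ∨ (InComp p F a y ∧ InComp p F b x))


section AuxLemmas

variable {p : Fin n → Fin n} {r : Fin n} {F : Set (Fin n)}

lemma anc_le (hpr : p r = r) (hplt : ∀ v, v ≠ r → p v < v) {v u : Fin n}
    (h : Anc p v u) : v ≤ u := by
  induction h with
  | refl => exact le_refl _
  | tail _ hstep ih =>
      rename_i b c _
      have hb : p b ≤ b := by
        rcases eq_or_ne b r with rfl | hbr
        · rw [hpr]
        · exact (hplt b hbr).le
      rw [← hstep]
      exact hb.trans ih

lemma anc_antisymm (hpr : p r = r) (hplt : ∀ v, v ≠ r → p v < v) {a b : Fin n}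
    (h1 : Anc p a b) (h2 : Anc p b a) : a = b :=
  le_antisymm (anc_le hpr hplt h1) (anc_le hpr hplt h2)

lemma anc_trans {a b c : Fin n} (h1 : Anc p a b) (h2 : Anc p b c) : Anc p a c :=
  Relation.ReflTransGen.trans h2 h1

lemma rtg_cmp {α : Type*} {f : α → α} {x a b : α}
    (h1 : Relation.ReflTransGen (fun u v => f u = v) x a)
    (h2 : Relation.ReflTransGen (fun u v => f u = v) x b) :
    Relation.ReflTransGen (fun u v => f u = v) a b ∨
      Relation.ReflTransGen (fun u v => f u = v) b a := by
  induction h1 using Relation.ReflTransGen.head_induction_on generalizing b with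
  | refl => exact Or.inl h2
  | head hstep hrest ih =>
      rename_i x' c
      rcases h2.cases_head with rfl | ⟨c', hc', hrest2⟩
      · exact Or.inr (Relation.ReflTransGen.head hstep hrest)
      · have : c' = c := by rw [← hc', ← hstep]
        subst this
        exact ih hrest2

/-- Ancestors of a common vertex are comparable. -/
lemma anc_cmp {x a b : Fin n} (h1 : Anc p a x) (h2 : Anc p b x) :
    Anc p b a ∨ Anc p a b :=
  rtg_cmp h1 h2

lemma inComp_symm {a b : Fin n} (h : InComp p F a b) : InComp p F b a :=
  by
    induction h with
    | refl => exact Relation.ReflTransGen.refl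
    | tail _ hu ih => exact Relation.ReflTransGen.head ⟨hu.2.1, hu.1, hu.2.2.symm⟩ ih

lemma inComp_notF {a b : Fin n} (h : InComp p F a b) (ha : a ∉ F) : b ∉ F := by
  induction h with
  | refl => exact ha
  | tail _ hstep _ => exact hstep.2.1

/-- A tree chain avoiding `F` gives connectivity in `T \ F`. -/
lemma chain_inComp {a b : Fin n}
    (h : Relation.ReflTransGen (fun u v => p u = v) a b)
    (hF : ∀ x, Relation.ReflTransGen (fun u v => p u = v) a x →
      Relation.ReflTransGen (fun u v => p u = v) x b → x ∉ F) :
    InComp p F a b := by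
  induction h with
  | refl => exact Relation.ReflTransGen.refl
  | tail hac hstep ih =>
      rename_i c d
      have hih : InComp p F a c := ih (fun x hx1 hx2 =>
        hF x hx1 (hx2.tail hstep))
      exact hih.tail ⟨hF c hac (Relation.ReflTransGen.single hstep),
        hF d (hac.tail hstep) Relation.ReflTransGen.refl, Or.inl hstep⟩

/-- If two vertices on a tree chain are not connected in `T \ F`, some vertex
on the chain is failed. -/
lemma chain_failed {a b : Fin n}
    (h : Relation.ReflTransGen (fun u v => p u = v) a b)
    (hn : ¬ InComp p F a b) :
    ∃ f ∈ F, Anc p f a ∧ Anc p b f := by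
  by_contra hc
  push_neg at hc
  exact hn (chain_inComp h (fun x hx1 hx2 hxF => hc x hxF hx1 hx2))

/-- Meet lemma: any two vertices in the same component of `T \ F` have a common
ancestor inside the component. -/
lemma inComp_meet {v u : Fin n} (h : InComp p F v u) :
    ∃ w, InComp p F v w ∧ Anc p w v ∧ Anc p w u := by
  induction h with
  | refl => exact ⟨v, Relation.ReflTransGen.refl, Relation.ReflTransGen.refl,
      Relation.ReflTransGen.refl⟩
  | tail hvc hstep ih =>
      rename_i c d
      obtain ⟨w, hw1, hw2, hw3⟩ := ih
      rcases hstep.2.2 with hcd | hdc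
      · -- p c = d : d is the parent of c
        rcases rtg_cmp (f := p) hw3 (Relation.ReflTransGen.single hcd) with hwd | hdw
        · -- Anc p d w
          exact ⟨d, hvc.tail hstep, anc_trans hwd hw2, Relation.ReflTransGen.refl⟩
        · exact ⟨w, hw1, hw2, hdw⟩
      · -- p d = c : c is the parent of d
        exact ⟨w, hw1, hw2, anc_trans hw3 (Relation.ReflTransGen.single hdc)⟩

/-- Every non-failed vertex lies in a component with a root. -/
lemma exists_root (hpr : p r = r) (hplt : ∀ v, v ≠ r → p v < v) {v : Fin n}
    (hv : v ∉ F) : ∃ ρ, IsCompRoot p F ρ ∧ InComp p F v ρ := by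
  obtain ⟨m, hmC, hmin⟩ := Set.exists_min_image {u | InComp p F v u} id
    (Set.toFinite _) ⟨v, Relation.ReflTransGen.refl⟩
  refine ⟨m, ⟨inComp_notF hmC hv, ?_⟩, hmC⟩
  intro u hu
  obtain ⟨w, hw1, hw2, hw3⟩ := inComp_meet hu
  have hwC : InComp p F v w := hmC.trans hw1
  have h1 : m ≤ w := hmin w hwC
  have h2 : w ≤ m := anc_le hpr hplt hw2
  have : w = m := le_antisymm h2 h1
  rwa [this] at hw3

lemma root_unique (hpr : p r = r) (hplt : ∀ v, v ≠ r → p v < v) {a b : Fin n}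
    (ha : IsCompRoot p F a) (hb : IsCompRoot p F b) (hab : InComp p F a b) :
    a = b :=
  anc_antisymm hpr hplt (ha.2 b hab) (hb.2 a (inComp_symm hab))

lemma root_cases (hpr : p r = r) (hplt : ∀ v, v ≠ r → p v < v)
    (hroot : ∀ v, Anc p r v) (hF : ∃ f, f ∈ F) {ρ : Fin n}
    (hρ : IsCompRoot p F ρ) : Internal p F ρ ∨ HangRoot p F ρ := by
  by_cases hi : Internal p F ρ
  · exact Or.inl hi
  refine Or.inr ⟨hρ, ?_, hi⟩
  have hne : ρ ≠ r := by
    rintro rfl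
    obtain ⟨f, hf⟩ := hF
    exact hi ⟨f, hf, hroot f⟩
  by_contra hpF
  have hstep : InComp p F ρ (p ρ) :=
    Relation.ReflTransGen.single ⟨hρ.1, hpF, Or.inl rfl⟩
  have h1 : Anc p ρ (p ρ) := hρ.2 _ hstep
  have h2 : ρ ≤ p ρ := anc_le hpr hplt h1
  exact absurd h2 (not_le_of_gt (hplt ρ hne))

end AuxLemmas


/-- Any internal component joined by a back-edge to a hanging subtree rooted at `h`
has its root an ancestor of `h`. -/
lemma hang_anc {p : Fin n → Fin n} {r : Fin n} {F : Set (Fin n)}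
    (hpr : p r = r) (hplt : ∀ v, v ≠ r → p v < v)
    {G : SimpleGraph (Fin n)} {h ρ : Fin n}
    (hh : HangRoot p F h) (hρ : IRoot p F ρ) (hj : JoinedBack G p F h ρ) :
    Anc p ρ h := by
  obtain ⟨x, y, ⟨hadj, hyx, hpxy⟩, hcase⟩ := hj
  have hne : ¬ InComp p F h ρ := by
    intro hc
    have : h = ρ := root_unique hpr hplt hh.1 hρ.1 hc
    exact hh.2.2 (this ▸ hρ.2)
  rcases hcase with ⟨hhx, hρy⟩ | ⟨hhy, hρx⟩
  · by_cases hxy : InComp p F x y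
    · exact absurd ((hhx.trans hxy).trans (inComp_symm hρy)) hne
    · have hax : Anc p h x := hh.1.2 x hhx
      have hay : Anc p ρ y := hρ.1.2 y hρy
      have haρx : Anc p ρ x := anc_trans hay hyx
      rcases anc_cmp haρx hax with hcmp | hcmp
      · exfalso
        obtain ⟨f, hfF, _, hbf⟩ := chain_failed hcmp
          (fun hc => hne (inComp_symm hc))
        exact hh.2.2 ⟨f, hfF, hbf⟩
      · exact hcmp
  · by_cases hxy : InComp p F x y
    · exact absurd ((hhy.trans (inComp_symm hxy)).trans (inComp_symm hρx)) hne
    · exfalso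
      obtain ⟨f, hfF, _, hbf⟩ := chain_failed hyx hxy
      exact hh.2.2 ⟨f, hfF, anc_trans (hh.1.2 y hhy) hbf⟩

/-- Among the internal components joined to a hanging subtree, there is a lowest one. -/
lemma exists_lowest {p : Fin n → Fin n} {r : Fin n} {F : Set (Fin n)}
    (hpr : p r = r) (hplt : ∀ v, v ≠ r → p v < v)
    {G : SimpleGraph (Fin n)} {h : Fin n} (hh : HangRoot p F h)
    (hS : ∃ ρ, IRoot p F ρ ∧ JoinedBack G p F h ρ) :
    ∃ ρk, (IRoot p F ρk ∧ JoinedBack G p F h ρk) ∧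
      ∀ ρ, IRoot p F ρ → JoinedBack G p F h ρ → Anc p ρk ρ := by
  obtain ⟨m, hmS, hmin⟩ := Set.exists_min_image
    {ρ | IRoot p F ρ ∧ JoinedBack G p F h ρ} id (Set.toFinite _) hS
  refine ⟨m, hmS, ?_⟩
  intro ρ hρ1 hρ2
  have ha1 := hang_anc hpr hplt hh hmS.1 hmS.2
  have ha2 := hang_anc hpr hplt hh hρ1 hρ2
  rcases anc_cmp ha2 ha1 with hc | hc
  · exact hc
  · have hle : ρ ≤ m := anc_le hpr hplt hc
    have heq : ρ = m := le_antisymm hle (hmin ρ ⟨hρ1, hρ2⟩)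
    rw [heq]
    exact Relation.ReflTransGen.refl

/-- For any connectivity graph `R` of the internal components of `T \ F`, two
internal components are connected in `G \ F` iff their roots are connected in `R`. -/
theorem stmt13
    (G : SimpleGraph (Fin n)) (p : Fin n → Fin n) (r : Fin n)
    (hG : G.Connected)
    (hpr : p r = r) (hplt : ∀ v, v ≠ r → p v < v) (hroot : ∀ v, Anc p r v)
    (hspan : ∀ v, v ≠ r → G.Adj (p v) v)
    (hdfs : ∀ x y, G.Adj x y → Anc p x y ∨ Anc p y x)
    (hpre : ∀ u v w : Fin n, u < v → v < w → Anc p u w → Anc p u v)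
    (F : Set (Fin n)) (hrF : r ∉ F)
    (R : Fin n → Fin n → Prop)
    (hsym : ∀ a b, R a b → R b a)
    (hvert : ∀ a b, R a b → IRoot p F a ∧ IRoot p F b)
    -- (1): Type-1 edges are present
    (h1 : ∀ a b, IRoot p F a → IRoot p F b → a ≠ b → JoinedBack G p F a b → R a b)
    -- (2): Type-2 edges are present
    (h2 : ∀ h ρk, HangRoot p F h → IRoot p F ρk → JoinedBack G p F h ρk →
      (∀ ρ, IRoot p F ρ → JoinedBack G p F h ρ → Anc p ρk ρ) →
      ∀ ρ, IRoot p F ρ → JoinedBack G p F h ρ → ρ ≠ ρk → R ρ ρk)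
    -- (3): every edge of R joins roots of internal components connected in G \ F
    (h3 : ∀ a b, R a b → ConnGF G F a b) :
    ∀ ρ₁ ρ₂, IRoot p F ρ₁ → IRoot p F ρ₂ →
      (ConnGF G F ρ₁ ρ₂ ↔ Relation.ReflTransGen R ρ₁ ρ₂) := by
  intro ρ₁ ρ₂ hρ₁ hρ₂
  have hFne : ∃ f, f ∈ F := by obtain ⟨f, hf, _⟩ := hρ₁.2; exact ⟨f, hf⟩
  constructor
  · intro hconn
    suffices hcl : ∀ v, ConnGF G F ρ₁ v → ∃ ρ, IRoot p F ρ ∧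
        Relation.ReflTransGen R ρ₁ ρ ∧
        (InComp p F v ρ ∨ ∃ h, HangRoot p F h ∧ InComp p F v h ∧
          JoinedBack G p F h ρ ∧
          (∀ ρ', IRoot p F ρ' → JoinedBack G p F h ρ' → Anc p ρ ρ')) by
      obtain ⟨ρ, hρI, hpath, hcase⟩ := hcl ρ₂ hconn
      rcases hcase with hc | ⟨h, hhH, hch, _, _⟩
      · have heq : ρ₂ = ρ := root_unique hpr hplt hρ₂.1 hρI.1 hc
        rwa [← heq] at hpath
      · exfalso
        have heq : ρ₂ = h := root_unique hpr hplt hρ₂.1 hhH.1 hch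
        exact hhH.2.2 (heq ▸ hρ₂.2)
    intro v hv
    induction hv with
    | refl => exact ⟨ρ₁, hρ₁, Relation.ReflTransGen.refl,
        Or.inl Relation.ReflTransGen.refl⟩
    | tail hpath hstep ih =>
      rename_i c d
      obtain ⟨hadj, hcF, hdF⟩ := hstep
      obtain ⟨ρ, hρI, hrpath, hcase⟩ := ih
      by_cases hcd : InComp p F c d
      · refine ⟨ρ, hρI, hrpath, ?_⟩
        rcases hcase with hc | ⟨h, hh1, hh2, hh3, hh4⟩
        · exact Or.inl ((inComp_symm hcd).trans hc)
        · exact Or.inr ⟨h, hh1, (inComp_symm hcd).trans hh2, hh3, hh4⟩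
      · rcases hdfs c d hadj with hcd_anc | hdc_anc
        · -- `c` is an ancestor of `d` : back-edge (d, c), comp(c) is internal
          have hpdc : p d ≠ c := fun hpc =>
            hcd (Relation.ReflTransGen.single ⟨hcF, hdF, Or.inr hpc⟩)
          have hback : IsBack G p d c := ⟨hadj.symm, hcd_anc, hpdc⟩
          obtain ⟨f, hfF, _, hcf⟩ := chain_failed hcd_anc
            (fun hh => hcd (inComp_symm hh))
          rcases hcase with hc | ⟨h, hh1, hh2, _, _⟩
          · obtain ⟨ρd, hρdC, hdρd⟩ := exists_root hpr hplt hdF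
            rcases root_cases hpr hplt hroot hFne hρdC with hint | hhang
            · have hρdI : IRoot p F ρd := ⟨hρdC, hint⟩
              have hjb : JoinedBack G p F ρ ρd :=
                ⟨d, c, hback, Or.inr ⟨inComp_symm hc, inComp_symm hdρd⟩⟩
              have hρne : ρ ≠ ρd := fun he =>
                hcd (hc.trans (by rw [he]; exact inComp_symm hdρd))
              exact ⟨ρd, hρdI, hrpath.tail (h1 ρ ρd hρI hρdI hρne hjb),
                Or.inl hdρd⟩
            · have hjb : JoinedBack G p F ρd ρ :=
                ⟨d, c, hback, Or.inl ⟨inComp_symm hdρd, inComp_symm hc⟩⟩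
              obtain ⟨ρk, ⟨hkI, hkJ⟩, hklow⟩ :=
                exists_lowest hpr hplt hhang ⟨ρ, hρI, hjb⟩
              by_cases he : ρ = ρk
              · exact ⟨ρk, hkI, by rw [← he]; exact hrpath,
                  Or.inr ⟨ρd, hhang, hdρd, hkJ, hklow⟩⟩
              · have hr : R ρ ρk := h2 ρd ρk hhang hkI hkJ hklow ρ hρI hjb he
                exact ⟨ρk, hkI, hrpath.tail hr,
                  Or.inr ⟨ρd, hhang, hdρd, hkJ, hklow⟩⟩
          · exfalso
            exact hh1.2.2 ⟨f, hfF, anc_trans (hh1.1.2 c (inComp_symm hh2)) hcf⟩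
        · -- `d` is an ancestor of `c` : back-edge (c, d), comp(d) is internal
          have hpcd : p c ≠ d := fun hpc =>
            hcd (Relation.ReflTransGen.single ⟨hcF, hdF, Or.inl hpc⟩)
          have hback : IsBack G p c d := ⟨hadj, hdc_anc, hpcd⟩
          obtain ⟨ρd, hρdC, hdρd⟩ := exists_root hpr hplt hdF
          obtain ⟨f, hfF, _, hdf⟩ := chain_failed hdc_anc hcd
          have hρdI : IRoot p F ρd :=
            ⟨hρdC, f, hfF, anc_trans (hρdC.2 d (inComp_symm hdρd)) hdf⟩
          rcases hcase with hc | ⟨h, hh1, hh2, hh3, hh4⟩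
          · have hjb : JoinedBack G p F ρ ρd :=
              ⟨c, d, hback, Or.inl ⟨inComp_symm hc, inComp_symm hdρd⟩⟩
            have hρne : ρ ≠ ρd := fun he =>
              hcd (hc.trans (by rw [he]; exact inComp_symm hdρd))
            exact ⟨ρd, hρdI, hrpath.tail (h1 ρ ρd hρI hρdI hρne hjb),
              Or.inl hdρd⟩
          · have hjb : JoinedBack G p F h ρd :=
              ⟨c, d, hback, Or.inl ⟨inComp_symm hh2, inComp_symm hdρd⟩⟩
            by_cases he : ρd = ρ
            · exact ⟨ρd, hρdI, by rw [he]; exact hrpath, Or.inl hdρd⟩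
            · have hr : R ρd ρ := h2 h ρ hh1 hρI hh3 hh4 ρd hρdI hjb he
              exact ⟨ρd, hρdI, hrpath.tail (hsym _ _ hr), Or.inl hdρd⟩
  · intro hR
    clear hρ₂
    induction hR with
    | refl => exact Relation.ReflTransGen.refl
    | tail hpath hr ih => exact Relation.ReflTransGen.trans ih (h3 _ _ hr)
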